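/- arXiv:2605.20603 — 3 statements merged into one kernel-verified Lean document; each statement's English description precedes it below -/
import Mathlib

section
/- Let G be a hypergraph on vertex set {1,...,n} with cover ideal J(G) = ⋂_{e ∈ E(G)} (x_i : i ∈ e) in S = k[x_1,...,x_n], let t ≥ 1, and let x^a be a monomial with exponent vector a ∈ ℕ^n. Then the radical of the colon ideal (J(G)^(t) : x^a), where J(G)^(t) = ⋂_{e ∈ E(G)} (x_i : i ∈ e)^t is the t-th symbolic power, equals the cover ideal J(H) of the subhypergraph H of G whose edges are exactly those edges {i_1,...,i_s} of G with a_{i_1} + ... + a_{i_s} < t. -/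
/-!
Colon ideals commute with intersections and radicals with finite ones, so it suffices to treat a
single edge `e`, with `P = (x_i : i ∈ e)` and `a(e) = ∑_{i ∈ e} a_i`. If `a(e) ≥ t` then
`x^a ∈ P^t` and the colon ideal is the unit ideal. Otherwise give the variables of `e` weight one
and the others weight zero: every term of an element of `P^t` has weight `≥ t`, while `x^a` is
homogeneous of weight `a(e) < t`. So `f^N x^a ∈ P^t` forces the weight-zero part of `f^N`, i.e.
its image `π(f)^N` under `π : x_i ↦ 0 (i ∈ e)`, to vanish; then `π(f) = 0`, and `f ≡ π(f)` mod `P`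
gives `f ∈ P`. Hence `√(P^t : x^a) = P`.
-/

open MvPolynomial

theorem Ideal.radical_biInf_of_finite {R ι : Type*} [CommRing R] {s : Set ι} (hs : s.Finite)
    (I : ι → Ideal R) : (⨅ i ∈ s, I i).radical = ⨅ i ∈ s, (I i).radical := by
  lift s to Finset ι using hs
  simp only [Finset.mem_coe, ← Finset.inf_eq_iInf, ← radicalInfTopHom_apply, map_finset_inf]
  rfl

namespace MvPolynomial

variable {σ R : Type*} [CommRing R] [DecidableEq σ]

/-- The power of the new variable records the `s`-degree of each monomial. -/
noncomputable def weightVars (s : Finset σ) :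
    MvPolynomial σ R →ₐ[R] Polynomial (MvPolynomial σ R) :=
  aeval fun i => Polynomial.C (X i) * if i ∈ s then Polynomial.X else 1

noncomputable def setVarsZero (s : Finset σ) : MvPolynomial σ R →ₐ[R] MvPolynomial σ R :=
  aeval fun i => if i ∈ s then 0 else X i

@[simp]
lemma setVarsZero_X (s : Finset σ) (i : σ) :
    setVarsZero s (X i : MvPolynomial σ R) = if i ∈ s then 0 else X i :=
  aeval_X _ i

lemma X_pow_dvd_weightVars_of_mem_pow (s : Finset σ) {t : ℕ} {f : MvPolynomial σ R}
    (hf : f ∈ Ideal.span (X '' ↑s : Set (MvPolynomial σ R)) ^ t) :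
    Polynomial.X ^ t ∣ weightVars s f := by
  have hle : (Ideal.span (X '' ↑s : Set (MvPolynomial σ R))).map (weightVars s) ≤
      Ideal.span {Polynomial.X} := by
    rw [Ideal.map_span, Ideal.span_le]
    rintro - ⟨-, ⟨i, hi, rfl⟩, rfl⟩
    simp [weightVars, Ideal.mem_span_singleton, Finset.mem_coe.mp hi]
  have hmap := Ideal.mem_map_of_mem (weightVars s) hf
  rw [Ideal.map_pow] at hmap
  rw [← Ideal.mem_span_singleton, ← Ideal.span_singleton_pow]
  exact Ideal.pow_right_mono hle t hmap

lemma weightVars_prod_X_pow [Fintype σ] (s : Finset σ) (a : σ → ℕ) :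
    weightVars s (∏ i, X i ^ a i : MvPolynomial σ R) =
      Polynomial.C (∏ i, X i ^ a i) * Polynomial.X ^ (∑ i ∈ s, a i) := by
  simp only [weightVars, map_prod, map_pow, aeval_X, mul_pow, Finset.prod_mul_distrib, ite_pow,
    one_pow, Finset.prod_ite_mem, Finset.univ_inter, Finset.prod_pow_eq_pow_sum]

lemma constantCoeff_weightVars (s : Finset σ) (f : MvPolynomial σ R) :
    (weightVars s f).coeff 0 = setVarsZero s f := by
  have : Polynomial.constantCoeff.comp (weightVars s : MvPolynomial σ R →ₐ[R] _).toRingHom =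
      (setVarsZero s : MvPolynomial σ R →ₐ[R] _).toRingHom := by
    ext i : 2
    · simp [weightVars, algebraMap_eq]
    · by_cases hi : i ∈ s <;> simp [weightVars, hi]
  exact DFunLike.congr_fun this f

lemma mem_span_X_image_of_setVarsZero_eq_zero (s : Finset σ) {f : MvPolynomial σ R}
    (hf : setVarsZero s f = 0) :
    f ∈ Ideal.span (X '' ↑s : Set (MvPolynomial σ R)) := by
  set P := Ideal.span (X '' ↑s : Set (MvPolynomial σ R))
  have hmk : (Ideal.Quotient.mkₐ R P).comp (setVarsZero s) =
      Ideal.Quotient.mkₐ R P := by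
    refine algHom_ext fun i => ?_
    by_cases hi : i ∈ s
    · simp only [AlgHom.comp_apply, setVarsZero_X, if_pos hi, map_zero]
      exact (Ideal.Quotient.eq_zero_iff_mem.mpr (Ideal.subset_span ⟨i, hi, rfl⟩) :
        Ideal.Quotient.mk P (X i) = 0).symm
    · simp [hi]
  rw [← Ideal.Quotient.eq_zero_iff_mem, ← Ideal.Quotient.mkₐ_eq_mk R, ← hmk,
    AlgHom.comp_apply, hf, map_zero]

lemma prod_X_pow_mem_span_X_image_pow [Fintype σ] (s : Finset σ) (a : σ → ℕ) :
    (∏ i, X i ^ a i : MvPolynomial σ R) ∈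
      Ideal.span (X '' ↑s : Set (MvPolynomial σ R)) ^ (∑ i ∈ s, a i) := by
  rw [← Finset.prod_mul_prod_compl s, ← Finset.prod_pow_eq_pow_sum]
  exact Ideal.mul_mem_right _ _ (Ideal.prod_mem_prod fun i hi =>
    Ideal.pow_mem_pow (Ideal.subset_span (Set.mem_image_of_mem X hi)) _)

lemma colon_span_X_image_pow_eq_top [Fintype σ] {s : Finset σ} {a : σ → ℕ} {t : ℕ}
    (hts : t ≤ ∑ i ∈ s, a i) :
    (Ideal.span (X '' ↑s : Set (MvPolynomial σ R)) ^ t).colon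
      (Ideal.span {∏ i, (X i : MvPolynomial σ R) ^ a i}) = ⊤ := by
  rw [Ideal.colon_span, Submodule.colon_eq_top_iff_subset, Set.singleton_subset_iff]
  exact Ideal.pow_le_pow_right hts (prod_X_pow_mem_span_X_image_pow s a)

variable [IsDomain R] [Fintype σ]

lemma setVarsZero_eq_zero_of_mul_prod_X_pow_mem_pow {s : Finset σ} {a : σ → ℕ} {t : ℕ}
    (hst : ∑ i ∈ s, a i < t) {f : MvPolynomial σ R}
    (hf : f * ∏ i, X i ^ a i ∈ Ideal.span (X '' ↑s : Set (MvPolynomial σ R)) ^ t) :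
    setVarsZero s f = 0 := by
  have hcoeff := Polynomial.X_pow_dvd_iff.mp (X_pow_dvd_weightVars_of_mem_pow s hf) _ hst
  rw [map_mul, weightVars_prod_X_pow, ← mul_assoc, Polynomial.coeff_mul_X_pow',
    if_pos le_rfl, Nat.sub_self, Polynomial.coeff_mul_C,
    constantCoeff_weightVars] at hcoeff
  exact (mul_eq_zero.mp hcoeff).resolve_right
    (Finset.prod_ne_zero_iff.mpr fun i _ => pow_ne_zero _ (X_ne_zero i))

lemma radical_colon_span_X_image_pow_of_lt {s : Finset σ} {a : σ → ℕ} {t : ℕ}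
    (hst : ∑ i ∈ s, a i < t) :
    ((Ideal.span (X '' ↑s : Set (MvPolynomial σ R)) ^ t).colon
      (Ideal.span {∏ i, (X i : MvPolynomial σ R) ^ a i})).radical =
        Ideal.span (X '' ↑s) := by
  refine le_antisymm ?_ ?_
  · rintro f ⟨N, hN⟩
    rw [Ideal.mem_colon_span_singleton] at hN
    have := setVarsZero_eq_zero_of_mul_prod_X_pow_mem_pow hst hN
    rw [map_pow] at this
    exact mem_span_X_image_of_setVarsZero_eq_zero s (eq_zero_of_pow_eq_zero this)
  · calc _ ≤ (Ideal.span (X '' ↑s : Set (MvPolynomial σ R))).radical := Ideal.le_radical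
      _ = (Ideal.span (X '' ↑s) ^ t).radical := (Ideal.radical_pow _ (by omega)).symm
      _ ≤ _ := Ideal.radical_mono Ideal.le_colon

end MvPolynomial

theorem stmt_0_general (k : Type) [Field k] (n t : ℕ)
    (E : Set (Finset (Fin n)))
    (a : Fin n → ℕ) :
    Ideal.radical
      (Submodule.colon
        (⨅ e ∈ E, (Ideal.span ((fun i => (X i : MvPolynomial (Fin n) k)) '' ↑e)) ^ t)
        (Ideal.span {∏ i, (X i : MvPolynomial (Fin n) k) ^ a i}))
    = ⨅ e ∈ {e ∈ E | ∑ i ∈ e, a i < t},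
        Ideal.span ((fun i => (X i : MvPolynomial (Fin n) k)) '' ↑e) := by
  simp_rw [Submodule.iInf_colon]
  rw [Ideal.radical_biInf_of_finite E.toFinite]
  simp_rw [Set.mem_sep_iff, iInf_and]
  refine iInf_congr fun e => iInf_congr fun _ => ?_
  rw [iInf_eq_if]
  split_ifs with hlt
  · exact radical_colon_span_X_image_pow_of_lt hlt
  · rw [colon_span_X_image_pow_eq_top (not_lt.mp hlt), Ideal.radical_top]

/-- For a hypergraph `G` on `{1,...,n}` (edge set `E`, nonempty pairwise
incomparable edges), the radical of `(J(G)^{(t)} : x^a)` is the cover ideal of the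
subhypergraph `H` whose edges are the edges `e` of `G` with `∑_{i ∈ e} a i < t`. -/
theorem stmt_0 (k : Type) [Field k] (n t : ℕ) (ht : 1 ≤ t)
    (E : Set (Finset (Fin n)))
    (hne : ∀ e ∈ E, e.Nonempty)
    (hinc : ∀ e ∈ E, ∀ f ∈ E, e ⊆ f → e = f)
    (a : Fin n → ℕ) :
    Ideal.radical
      (Submodule.colon
        (⨅ e ∈ E, (Ideal.span ((fun i => (X i : MvPolynomial (Fin n) k)) '' ↑e)) ^ t)
        (Ideal.span {∏ i, (X i : MvPolynomial (Fin n) k) ^ a i}))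
    = ⨅ e ∈ {e ∈ E | ∑ i ∈ e, a i < t},
        Ideal.span ((fun i => (X i : MvPolynomial (Fin n) k)) '' ↑e) :=
  stmt_0_general k n t E a
end

section
/- For the cycle C_n on n ≥ 3 vertices, the maximum cardinality of a minimal vertex cover satisfies τ_max(C_n) = ⌊2n/3⌋. -/
/-- `C` is a vertex cover of the graph `G`. -/
def gIsCover {V : Type} (G : SimpleGraph V) (C : Finset V) : Prop :=
  ∀ ⦃x y⦄, G.Adj x y → x ∈ C ∨ y ∈ C

/-- `C` is a minimal vertex cover of `G`. -/
def gIsMinCover {V : Type} (G : SimpleGraph V) (C : Finset V) : Prop :=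
  gIsCover G C ∧ ∀ D ⊂ C, ¬ gIsCover G D

/-- `τ_max(G)`: the maximum cardinality of a minimal vertex cover of `G`. -/
noncomputable def gTauMax {V : Type} (G : SimpleGraph V) : ℕ :=
  sSup {m | ∃ C : Finset V, gIsMinCover G C ∧ C.card = m}

/-- Value-level characterization of adjacency in the cycle graph. -/
lemma adjChar (n : ℕ) (hn : 3 ≤ n) (u v : Fin n) :
    (SimpleGraph.cycleGraph n).Adj u v ↔
      (u.val = v.val + 1 ∨ v.val = u.val + 1 ∨
       (u.val = 0 ∧ v.val = n - 1) ∨ (v.val = 0 ∧ u.val = n - 1)) := by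
  rw [SimpleGraph.cycleGraph_adj']
  have hu := u.isLt
  have hv := v.isLt
  rw [Fin.sub_def, Fin.sub_def]
  constructor
  · rintro (h | h) <;>
    · simp only at h
      rcases Nat.lt_or_ge (u.val + (n - v.val)) n with hlt | hge
      all_goals rcases Nat.lt_or_ge (v.val + (n - u.val)) n with hlt2 | hge2
      all_goals first
        | (rw [Nat.mod_eq_of_lt (by omega)] at h; omega)
        | (rw [Nat.mod_eq_sub_mod (by omega), Nat.mod_eq_of_lt (by omega)] at h; omega)
  · intro h
    simp only
    rcases h with h | h | h | h
    · left; rw [Nat.mod_eq_sub_mod (by omega), Nat.mod_eq_of_lt (by omega)]; omega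
    · right; rw [Nat.mod_eq_sub_mod (by omega), Nat.mod_eq_of_lt (by omega)]; omega
    · left; rw [Nat.mod_eq_of_lt (by omega)]; omega
    · right; rw [Nat.mod_eq_of_lt (by omega)]; omega

/-- A cover such that every cover vertex has a neighbor outside the cover is minimal. -/
lemma minCover_of (n : ℕ) (C : Finset (Fin n))
    (hcov : gIsCover (SimpleGraph.cycleGraph n) C)
    (hmin : ∀ v ∈ C, ∃ w, (SimpleGraph.cycleGraph n).Adj v w ∧ w ∉ C) :
    gIsMinCover (SimpleGraph.cycleGraph n) C := by
  refine ⟨hcov, ?_⟩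
  intro D hD hDcov
  obtain ⟨v, hvC, hvD⟩ := Finset.exists_of_ssubset hD
  obtain ⟨w, hadj, hwC⟩ := hmin v hvC
  rcases hDcov hadj with h | h
  · exact hvD h
  · exact hwC (hD.subset h)

lemma count1 (n : ℕ) : ((Finset.range n).filter (fun i => i % 3 = 1)).card = (n + 1) / 3 := by
  induction n with
  | zero => simp
  | succ n ih =>
    rw [Finset.range_add_one, Finset.filter_insert]
    split_ifs with h
    · rw [Finset.card_insert_of_notMem (by simp)]
      omega
    · omega

lemma count0' (n : ℕ) (hn : 2 ≤ n) :
    ((Finset.range n).filter (fun i => i = 1 ∨ (i % 3 = 0 ∧ i ≠ 0))).card = (n + 2) / 3 := by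
  induction n with
  | zero => omega
  | succ n ih =>
    rcases Nat.lt_or_ge n 2 with h2 | h2
    · interval_cases n
      · omega
      · decide
    · rw [Finset.range_add_one, Finset.filter_insert]
      have := ih h2
      split_ifs with h
      · rw [Finset.card_insert_of_notMem (by simp)]
        omega
      · omega

/-- The cover used when `n % 3 ≠ 1`: pattern `101101101…` (vertices not ≡ 1 mod 3). -/
def CA (n : ℕ) : Finset (Fin n) := Finset.univ.filter (fun i => i.val % 3 ≠ 1)

lemma CA_cover (n : ℕ) (hn : 3 ≤ n) (hA : n % 3 ≠ 1) :
    gIsCover (SimpleGraph.cycleGraph n) (CA n) := by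
  intro x y hadj
  by_contra hc
  push_neg at hc
  obtain ⟨hx, hy⟩ := hc
  simp only [CA, Finset.mem_filter, Finset.mem_univ, true_and, not_not] at hx hy
  rw [adjChar n hn] at hadj
  omega

lemma CA_witness (n : ℕ) (hn : 3 ≤ n) (hA : n % 3 ≠ 1) :
    ∀ v ∈ CA n, ∃ w, (SimpleGraph.cycleGraph n).Adj v w ∧ w ∉ CA n := by
  intro v hv
  simp only [CA, Finset.mem_filter, Finset.mem_univ, true_and] at hv
  have hvlt := v.isLt
  rcases (by omega : v.val % 3 = 2 ∨ v.val % 3 = 0) with h | h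
  · refine ⟨⟨v.val - 1, by omega⟩, ?_, ?_⟩
    · rw [adjChar n hn]; left; show v.val = v.val - 1 + 1; omega
    · simp only [CA, Finset.mem_filter, Finset.mem_univ, true_and, not_not]
      show (v.val - 1) % 3 = 1; omega
  · have h1 : v.val + 1 < n := by omega
    refine ⟨⟨v.val + 1, h1⟩, ?_, ?_⟩
    · rw [adjChar n hn]; right; left; exact rfl
    · simp only [CA, Finset.mem_filter, Finset.mem_univ, true_and, not_not]
      show (v.val + 1) % 3 = 1; omega

lemma CA_card (n : ℕ) : (CA n).card = n - (n + 1) / 3 := by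
  have h0 : (CA n) = Finset.univ \ (Finset.univ.filter (fun i : Fin n => i.val % 3 = 1)) := by
    rw [← Finset.filter_not]; rfl
  rw [h0, Finset.card_sdiff_of_subset (Finset.filter_subset _ _)]
  have h2 : (Finset.univ.filter (fun i : Fin n => i.val % 3 = 1)).card
      = ((Finset.range n).filter (fun i => i % 3 = 1)).card := by
    rw [Finset.card_filter, Finset.card_filter]
    rw [← Fin.sum_univ_eq_sum_range (fun i => if i % 3 = 1 then 1 else 0) n]
  rw [h2, count1]
  simp

/-- The cover used when `n % 3 = 1`: pattern `10110110…110`. -/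
def CB (n : ℕ) : Finset (Fin n) :=
  Finset.univ.filter (fun i => ¬(i.val = 1 ∨ (i.val % 3 = 0 ∧ i.val ≠ 0)))

lemma CB_cover (n : ℕ) (hn : 3 ≤ n) (hB : n % 3 = 1) :
    gIsCover (SimpleGraph.cycleGraph n) (CB n) := by
  intro x y hadj
  by_contra hc
  push_neg at hc
  obtain ⟨hx, hy⟩ := hc
  simp only [CB, Finset.mem_filter, Finset.mem_univ, true_and, not_not] at hx hy
  rw [adjChar n hn] at hadj
  omega

lemma CB_witness (n : ℕ) (hn : 3 ≤ n) (hB : n % 3 = 1) :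
    ∀ v ∈ CB n, ∃ w, (SimpleGraph.cycleGraph n).Adj v w ∧ w ∉ CB n := by
  intro v hv
  simp only [CB, Finset.mem_filter, Finset.mem_univ, true_and, not_or, not_and, not_ne_iff] at hv
  obtain ⟨hv1, hv2⟩ := hv
  have hvlt := v.isLt
  rcases (by omega : v.val = 0 ∨ (v.val % 3 = 1 ∧ 2 ≤ v.val) ∨ v.val % 3 = 2) with h | h | h
  · refine ⟨⟨1, by omega⟩, ?_, ?_⟩
    · rw [adjChar n hn]; right; left; show (1 : ℕ) = v.val + 1; omega
    · simp only [CB, Finset.mem_filter, Finset.mem_univ, true_and, not_not]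
      trivial
  · refine ⟨⟨v.val - 1, by omega⟩, ?_, ?_⟩
    · rw [adjChar n hn]; left; show v.val = v.val - 1 + 1; omega
    · simp only [CB, Finset.mem_filter, Finset.mem_univ, true_and, not_not]
      right; constructor
      · show (v.val - 1) % 3 = 0; omega
      · show v.val - 1 ≠ 0; omega
  · have h1 : v.val + 1 < n := by omega
    refine ⟨⟨v.val + 1, h1⟩, ?_, ?_⟩
    · rw [adjChar n hn]; right; left; exact rfl
    · simp only [CB, Finset.mem_filter, Finset.mem_univ, true_and, not_not]
      right; constructor
      · show (v.val + 1) % 3 = 0; omega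
      · show v.val + 1 ≠ 0; omega

lemma CB_card (n : ℕ) (hn : 3 ≤ n) (hB : n % 3 = 1) : (CB n).card = n - (n + 2) / 3 := by
  have h0 : (CB n) = Finset.univ \
      (Finset.univ.filter (fun i : Fin n => i.val = 1 ∨ (i.val % 3 = 0 ∧ i.val ≠ 0))) := by
    rw [← Finset.filter_not]; rfl
  rw [h0, Finset.card_sdiff_of_subset (Finset.filter_subset _ _)]
  have h2 : (Finset.univ.filter (fun i : Fin n => i.val = 1 ∨ (i.val % 3 = 0 ∧ i.val ≠ 0))).card
      = ((Finset.range n).filter (fun i => i = 1 ∨ (i % 3 = 0 ∧ i ≠ 0))).card := by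
    rw [Finset.card_filter, Finset.card_filter]
    rw [← Fin.sum_univ_eq_sum_range (fun i => if i = 1 ∨ (i % 3 = 0 ∧ i ≠ 0) then 1 else 0) n]
  rw [h2, count0' n (by omega)]
  simp

/-- Upper bound: any minimal vertex cover of the cycle has at most `⌊2n/3⌋` vertices. -/
lemma minCover_le (n : ℕ) (hn : 3 ≤ n) (C : Finset (Fin n))
    (hC : gIsMinCover (SimpleGraph.cycleGraph n) C) : C.card ≤ 2 * n / 3 := by
  haveI : NeZero n := ⟨by omega⟩
  have hone : (1 : Fin n).val = 1 := by
    rw [Fin.val_one', Nat.mod_eq_of_lt (by omega)]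
  have hone0 : (1 : Fin n) ≠ 0 := by
    intro h
    have := congrArg Fin.val h
    rw [hone, Fin.val_zero] at this
    exact one_ne_zero this
  have hsub : ∀ u v : Fin n, (SimpleGraph.cycleGraph n).Adj u v → v = u - 1 ∨ v = u + 1 := by
    intro u v h
    rw [SimpleGraph.cycleGraph_adj'] at h
    rcases h with h | h
    · left
      have huv : u - v = 1 := Fin.ext (by rw [hone]; exact h)
      rw [sub_eq_iff_eq_add] at huv
      rw [huv, add_sub_cancel_left]
    · right
      have huv : v - u = 1 := Fin.ext (by rw [hone]; exact h)
      rw [sub_eq_iff_eq_add] at huv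
      rw [huv, add_comm]
  have h3 : ∀ j : Fin n, j - 1 ∉ C ∨ j ∉ C ∨ j + 1 ∉ C := by
    intro j
    by_contra hc
    push_neg at hc
    obtain ⟨ha, hb, hcc⟩ := hc
    refine hC.2 (C.erase j) (Finset.erase_ssubset hb) ?_
    have hne1 : j - 1 ≠ j := fun heq => hone0 (sub_eq_self.mp heq)
    have hne2 : j + 1 ≠ j := fun heq => hone0 (by
      have : j + 1 = j + 0 := by rw [heq, add_zero]
      exact add_left_cancel this)
    intro x y hadj
    rcases hC.1 hadj with hx | hy
    · by_cases hxj : x = j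
      · subst hxj
        rcases hsub x y hadj with h | h
        · right; exact Finset.mem_erase.mpr ⟨by rw [h]; exact hne1, by rw [h]; exact ha⟩
        · right; exact Finset.mem_erase.mpr ⟨by rw [h]; exact hne2, by rw [h]; exact hcc⟩
      · left; exact Finset.mem_erase.mpr ⟨hxj, hx⟩
    · by_cases hyj : y = j
      · subst hyj
        rcases hsub y x hadj.symm with h | h
        · left; exact Finset.mem_erase.mpr ⟨by rw [h]; exact hne1, by rw [h]; exact ha⟩
        · left; exact Finset.mem_erase.mpr ⟨by rw [h]; exact hne2, by rw [h]; exact hcc⟩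
      · right; exact Finset.mem_erase.mpr ⟨hyj, hy⟩
  classical
  set f : Fin n → ℕ := fun j => if j ∉ C then 1 else 0 with hf
  have hshift : ∀ c : Fin n, ∑ j : Fin n, f (j + c) = ∑ j : Fin n, f j := by
    intro c
    exact Equiv.sum_comp (Equiv.addRight c) f
  have hshift' : ∑ j : Fin n, f (j - 1) = ∑ j : Fin n, f j :=
    Equiv.sum_comp (Equiv.subRight (1 : Fin n)) f
  have hcompl : ∑ j : Fin n, f j = n - C.card := by
    rw [hf]
    rw [← Finset.card_filter]
    rw [Finset.filter_not, Finset.filter_univ_mem, Finset.card_sdiff_of_subset (Finset.subset_univ C)]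
    simp
  have hge : ∀ j : Fin n, 1 ≤ f (j - 1) + f j + f (j + 1) := by
    intro j
    rcases h3 j with h | h | h
    · have h1 : f (j - 1) = 1 := by simp [hf, h]
      omega
    · have h1 : f j = 1 := by simp [hf, h]
      omega
    · have h1 : f (j + 1) = 1 := by simp [hf, h]
      omega
  have hsum : n ≤ ∑ j : Fin n, (f (j - 1) + f j + f (j + 1)) := by
    calc n = ∑ _j : Fin n, 1 := by simp
    _ ≤ _ := Finset.sum_le_sum (fun j _ => hge j)
  rw [Finset.sum_add_distrib, Finset.sum_add_distrib, hshift', hshift 1, hcompl] at hsum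
  have hcard : C.card ≤ n := by
    simpa using Finset.card_le_univ C
  omega

/-- For the cycle `C_n`, `n ≥ 3`, one has `τ_max(C_n) = ⌊2n/3⌋`. -/
theorem stmt_3 (n : ℕ) (hn : 3 ≤ n) :
    gTauMax (SimpleGraph.cycleGraph n) = 2 * n / 3 := by
  have hmem : 2 * n / 3 ∈ {m | ∃ C : Finset (Fin n),
      gIsMinCover (SimpleGraph.cycleGraph n) C ∧ C.card = m} := by
    by_cases hA : n % 3 = 1
    · exact ⟨CB n, minCover_of n (CB n) (CB_cover n hn hA) (CB_witness n hn hA),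
        by rw [CB_card n hn hA]; omega⟩
    · exact ⟨CA n, minCover_of n (CA n) (CA_cover n hn hA) (CA_witness n hn hA),
        by rw [CA_card n]; omega⟩
  have hub : ∀ m ∈ {m | ∃ C : Finset (Fin n),
      gIsMinCover (SimpleGraph.cycleGraph n) C ∧ C.card = m}, m ≤ 2 * n / 3 := by
    rintro m ⟨C, hC, rfl⟩
    exact minCover_le n hn C hC
  exact le_antisymm (csSup_le ⟨_, hmem⟩ hub) (le_csSup ⟨2 * n / 3, hub⟩ hmem)
end

section
/- Let G be a simple graph and u a vertex of G having a pure branch u, v_1, ..., v_k with k ≥ 3, meaning v_k is a leaf and each v_i (1 ≤ i ≤ k) has degree at most 2 in G, with edges {u,v_1},{v_1,v_2},...,{v_{k-1},v_k}. Let H be the induced subgraph of G on V(G) \ {v_k, v_{k-1}, v_{k-2}}. Then τ_max(H) ≤ τ_max(G) − 2. -/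
/-- The subgraph of `G` induced on the vertex subset `s` (kept on the same ambient
vertex type: all vertices outside `s` become isolated, which does not affect
minimal vertex covers). -/
def SimpleGraph.restrict {V : Type} (G : SimpleGraph V) (s : Set V) : SimpleGraph V where
  Adj x y := G.Adj x y ∧ x ∈ s ∧ y ∈ s
  symm := ⟨fun x y ⟨h, hx, hy⟩ => ⟨h.symm, hy, hx⟩⟩
  loopless := ⟨fun x ⟨h, _, _⟩ => G.loopless.irrefl x h⟩

section Cover

variable {V : Type} {G : SimpleGraph V} {C : Finset V}

theorem gIsCover.insert_insert_of_restrict [DecidableEq V] {b c d : V}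
    (hc : ∀ x, G.Adj c x → x = b ∨ x = d)
    (hC : gIsCover (G.restrict {x | x ≠ d ∧ x ≠ c ∧ x ≠ b}) C) :
    gIsCover G (insert d (insert b C)) := by
  intro x y hxy
  by_contra! h
  simp only [Finset.mem_insert, not_or] at h
  obtain ⟨⟨hxd, hxb, hxC⟩, hyd, hyb, hyC⟩ := h
  have hxc : x ≠ c := by rintro rfl; rcases hc y hxy with rfl | rfl <;> contradiction
  have hyc : y ≠ c := by rintro rfl; rcases hc x hxy.symm with rfl | rfl <;> contradiction
  exact (hC ⟨hxy, ⟨hxd, hxc, hxb⟩, hyd, hyc, hyb⟩).elim hxC hyC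

namespace gIsMinCover

theorem exists_adj_notMem [DecidableEq V] (hC : gIsMinCover G C) {x : V} (hx : x ∈ C) :
    ∃ y, G.Adj x y ∧ y ∉ C := by
  by_contra! hpriv
  refine hC.2 (C.erase x) (Finset.erase_ssubset hx) fun p q hpq => ?_
  rcases eq_or_ne p x with rfl | hpx
  · exact Or.inr (Finset.mem_erase.2 ⟨hpq.ne.symm, hpriv q hpq⟩)
  rcases eq_or_ne q x with rfl | hqx
  · exact Or.inl (Finset.mem_erase.2 ⟨hpq.ne, hpriv p hpq.symm⟩)
  exact (hC.1 hpq).imp (fun h => Finset.mem_erase.2 ⟨hpx, h⟩)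
    (fun h => Finset.mem_erase.2 ⟨hqx, h⟩)

theorem of_forall_exists_adj_notMem (hcov : gIsCover G C)
    (hpriv : ∀ x ∈ C, ∃ y, G.Adj x y ∧ y ∉ C) : gIsMinCover G C := by
  refine ⟨hcov, fun D hDC hD => ?_⟩
  obtain ⟨x, hxC, hxD⟩ := Finset.exists_of_ssubset hDC
  obtain ⟨y, hxy, hyC⟩ := hpriv x hxC
  exact (hD hxy).elim hxD fun hyD => hyC (hDC.subset hyD)

theorem coe_subset_of_restrict [DecidableEq V] {s : Set V}
    (hC : gIsMinCover (G.restrict s) C) : (C : Set V) ⊆ s := fun _ hx =>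
  let ⟨_, hxy, _⟩ := hC.exists_adj_notMem hx
  hxy.2.1

theorem insert_insert_of_restrict [DecidableEq V] {b c d : V} (hbc : G.Adj b c)
    (hcd : G.Adj c d) (hc : ∀ x, G.Adj c x → x = b ∨ x = d)
    (hC : gIsMinCover (G.restrict {x | x ≠ d ∧ x ≠ c ∧ x ≠ b}) C) :
    gIsMinCover G (insert d (insert b C)) := by
  have hsub := hC.coe_subset_of_restrict
  have hcC' : c ∉ insert d (insert b C) := by
    simp only [Finset.mem_insert, not_or]
    exact ⟨hcd.ne, hbc.ne.symm, fun h => (hsub h).2.1 rfl⟩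
  refine of_forall_exists_adj_notMem (hC.1.insert_insert_of_restrict hc) fun x hx => ?_
  simp only [Finset.mem_insert] at hx
  rcases hx with rfl | rfl | hx
  · exact ⟨c, hcd.symm, hcC'⟩
  · exact ⟨c, hbc, hcC'⟩
  · obtain ⟨y, ⟨hxy, -, hyd, -, hyb⟩, hyC⟩ := hC.exists_adj_notMem hx
    exact ⟨y, hxy, by simp [hyd, hyb, hyC]⟩

end gIsMinCover

end Cover

theorem SimpleGraph.eq_or_eq_of_degree_le_two {V : Type} {G : SimpleGraph V} {b c d x : V}
    [Fintype (G.neighborSet c)] (hcb : G.Adj c b) (hcd : G.Adj c d) (hbd : b ≠ d)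
    (hdeg : G.degree c ≤ 2) (hcx : G.Adj c x) : x = b ∨ x = d := by
  classical
  have hN : {b, d} = G.neighborFinset c := by
    refine Finset.eq_of_subset_of_card_le (fun y hy => ?_) ?_
    · rcases Finset.mem_insert.1 hy with rfl | hy
      · simpa
      · rw [Finset.mem_singleton.1 hy]; simpa
    · rwa [Finset.card_pair hbd, card_neighborFinset_eq_degree]
  simpa [← hN] using (G.mem_neighborFinset c x).2 hcx

section TauMax

variable {V : Type} [Fintype V] {G : SimpleGraph V}

theorem exists_gIsMinCover (G : SimpleGraph V) : ∃ C, gIsMinCover G C := by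
  have huniv : gIsCover G Finset.univ := fun x _ _ => Or.inl (Finset.mem_univ x)
  obtain ⟨C, hC, hmin⟩ := wellFounded_lt.has_min {D : Finset V | gIsCover G D} ⟨_, huniv⟩
  exact ⟨C, hC, fun D hDC hD => hmin D hD hDC⟩

theorem bddAbove_card_gIsMinCover (G : SimpleGraph V) :
    BddAbove {m | ∃ C : Finset V, gIsMinCover G C ∧ C.card = m} := by
  refine ⟨Fintype.card V, ?_⟩
  rintro _ ⟨C, -, rfl⟩
  exact C.card_le_univ

theorem exists_gIsMinCover_card_eq_gTauMax (G : SimpleGraph V) :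
    ∃ C, gIsMinCover G C ∧ C.card = gTauMax G := by
  obtain ⟨C, hC⟩ := exists_gIsMinCover G
  exact Nat.sSup_mem (s := {m | ∃ C : Finset V, gIsMinCover G C ∧ C.card = m})
    ⟨C.card, C, hC, rfl⟩ (bddAbove_card_gIsMinCover G)

theorem gIsMinCover.card_le_gTauMax {C : Finset V} (hC : gIsMinCover G C) :
    C.card ≤ gTauMax G :=
  le_csSup (bddAbove_card_gIsMinCover G) ⟨C, hC, rfl⟩

theorem gTauMax_restrict_add_two_le [DecidableEq V] {b c d : V}
    (hbc : G.Adj b c) (hcd : G.Adj c d) (hbd : b ≠ d) (hc : ∀ x, G.Adj c x → x = b ∨ x = d) :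
    gTauMax (G.restrict {x | x ≠ d ∧ x ≠ c ∧ x ≠ b}) + 2 ≤ gTauMax G := by
  obtain ⟨C, hC, hcard⟩ := exists_gIsMinCover_card_eq_gTauMax
    (G.restrict {x | x ≠ d ∧ x ≠ c ∧ x ≠ b})
  have hsub := hC.coe_subset_of_restrict
  have hcard' : (insert d (insert b C)).card = C.card + 2 := by
    rw [Finset.card_insert_of_notMem, Finset.card_insert_of_notMem fun h => (hsub h).2.2 rfl]
    simp only [Finset.mem_insert, not_or]
    exact ⟨hbd.symm, fun h => (hsub h).1 rfl⟩
  rw [← hcard, ← hcard']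
  exact (hC.insert_insert_of_restrict hbc hcd hc).card_le_gTauMax

end TauMax

theorem stmt_5 {V : Type} [Fintype V] (G : SimpleGraph V)
    [DecidableRel G.Adj] (k : ℕ) (hk : 3 ≤ k)
    (w : Fin (k + 1) → V) (hinj : Function.Injective w)
    (hadj : ∀ i : Fin k, G.Adj (w i.castSucc) (w i.succ))
    (hdeg : ∀ i : Fin (k + 1), i ≠ 0 → G.degree (w i) ≤ 2) :
    gTauMax (G.restrict
        {x | x ≠ w ⟨k, by omega⟩ ∧ x ≠ w ⟨k - 1, by omega⟩ ∧ x ≠ w ⟨k - 2, by omega⟩}) + 2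
      ≤ gTauMax G := by
  classical
  have hstep : ∀ i j : Fin (k + 1), (j : ℕ) = i + 1 → G.Adj (w i) (w j) := fun i j hij => by
    convert hadj ⟨i, by omega⟩ <;> ext <;> simp [hij]
  have hbc := hstep ⟨k - 2, by omega⟩ ⟨k - 1, by omega⟩ (by dsimp; omega)
  have hcd := hstep ⟨k - 1, by omega⟩ ⟨k, by omega⟩ (by dsimp; omega)
  have hbd : w ⟨k - 2, by omega⟩ ≠ w ⟨k, by omega⟩ :=
    hinj.ne (Fin.ne_of_val_ne (by dsimp; omega))
  have hdeg_c := hdeg ⟨k - 1, by omega⟩ (Fin.ne_of_val_ne (by dsimp; omega))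
  exact gTauMax_restrict_add_two_le hbc hcd hbd
    fun x => SimpleGraph.eq_or_eq_of_degree_le_two hbc.symm hcd hbd hdeg_c
end
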